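/- Let E be a complex inner product space, and let x, y, θ ∈ E be unit vectors with [x] ≠ [θ] and [y] ≠ [θ] as projective points. Then min(|[θ],[x]|, |[θ],[y]|) ≤ dist([θ⊕θ], x#y) ≤ max(|[θ],[x]|, |[θ],[y]|), where dist([θ⊕θ], x#y) denotes the infimum over (λ,μ) ∈ ℂ²∖{0} of the Fubini–Study distance |[(λx, μy)], [(θ,θ)]| computed in E × E. -/

import Mathlib

open scoped InnerProductSpace

/-- The Fubini–Study (chordal) distance between the projective points `[u]`, `[v]`
determined by nonzero vectors `u`, `v` of a complex inner product space:
`|[u],[v]|² = 1 − |⟨u,v⟩|²/(‖u‖²·‖v‖²)`. -/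
noncomputable def fsDist {E : Type*} [NormedAddCommGroup E] [InnerProductSpace ℂ E]
    (u v : E) : ℝ :=
  Real.sqrt (1 - ‖(⟪u, v⟫_ℂ)‖ ^ 2 / (‖u‖ ^ 2 * ‖v‖ ^ 2))

/-- The distance from the projective point `[(θ,θ)]` of `E × E` (with the direct-sum
inner product, i.e. the `L²` product `WithLp 2 (E × E)`) to the join `x#y`, namely the
infimum over `(λ,μ) ∈ ℂ² ∖ {0}` of the Fubini–Study distances `|[(λx, μy)], [(θ,θ)]|`. -/
noncomputable def joinDist {E : Type*} [NormedAddCommGroup E] [InnerProductSpace ℂ E]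
    (x y θ : E) : ℝ :=
  ⨅ p : {p : ℂ × ℂ // p ≠ 0},
    fsDist ((WithLp.equiv 2 (E × E)).symm ((p : ℂ × ℂ).1 • x, (p : ℂ × ℂ).2 • y))
      ((WithLp.equiv 2 (E × E)).symm (θ, θ))

/-! Write `w = (⟪x,θ⟫, ⟪y,θ⟫) ∈ ℂ²`. For unit vectors, the point `(λx, μy)` of the join satisfies
`⟪(λx, μy), (θ,θ)⟫ = ⟪(λ,μ), w⟫` and `‖(λx, μy)‖ = ‖(λ,μ)‖`, so by Cauchy–Schwarz in `ℂ²` the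
squared distance `1 - ‖⟪(λ,μ), w⟫‖² / (2‖(λ,μ)‖²)` is minimised at `(λ,μ) = w`
(anywhere if `w = 0`). Hence
`dist([θ⊕θ], x#y)² = (|[θ],[x]|² + |[θ],[y]|²) / 2`, a quadratic mean, which lies between the
minimum and the maximum of the two distances. -/

theorem min_le_sqrt_add_sq_div_two {s t : ℝ} (hs : 0 ≤ s) (ht : 0 ≤ t) :
    min s t ≤ √((s ^ 2 + t ^ 2) / 2) :=
  Real.le_sqrt_of_sq_le <| by
    rcases le_total s t with h | h
    · nlinarith [min_eq_left h]
    · nlinarith [min_eq_right h]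

theorem sqrt_add_sq_div_two_le_max {s t : ℝ} (hs : 0 ≤ s) (ht : 0 ≤ t) :
    √((s ^ 2 + t ^ 2) / 2) ≤ max s t :=
  Real.sqrt_le_iff.mpr ⟨le_max_of_le_left hs, by
    rcases le_total s t with h | h
    · nlinarith [max_eq_right h]
    · nlinarith [max_eq_left h]⟩

theorem norm_inner_sq_div_norm_sq_le {𝕜 F : Type*} [RCLike 𝕜] [NormedAddCommGroup F]
    [InnerProductSpace 𝕜 F] (p w : F) : ‖⟪p, w⟫_𝕜‖ ^ 2 / ‖p‖ ^ 2 ≤ ‖w‖ ^ 2 := by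
  rcases eq_or_ne p 0 with rfl | hp
  · simp
  rw [div_le_iff₀ (by positivity), ← mul_pow, mul_comm]
  gcongr
  exact norm_inner_le_norm p w

theorem exists_ne_zero_norm_inner_sq_div_norm_sq_eq {𝕜 F : Type*} [RCLike 𝕜]
    [NormedAddCommGroup F] [InnerProductSpace 𝕜 F] [Nontrivial F] (w : F) :
    ∃ p : F, p ≠ 0 ∧ ‖⟪p, w⟫_𝕜‖ ^ 2 / ‖p‖ ^ 2 = ‖w‖ ^ 2 := by
  rcases eq_or_ne w 0 with rfl | hw
  · obtain ⟨p, hp⟩ := exists_ne (0 : F)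
    exact ⟨p, hp, by simp⟩
  · refine ⟨w, hw, ?_⟩
    rw [inner_self_eq_norm_sq_to_K, ← RCLike.ofReal_pow, RCLike.norm_ofReal, abs_of_nonneg
      (by positivity)]
    field_simp [norm_ne_zero_iff.mpr hw]

section FubiniStudy

variable {E : Type*} [NormedAddCommGroup E] [InnerProductSpace ℂ E]

theorem fsDist_nonneg (u v : E) : 0 ≤ fsDist u v := Real.sqrt_nonneg _

theorem fsDist_sq_of_norm_eq_one {u v : E} (hu : ‖u‖ = 1) (hv : ‖v‖ = 1) :
    fsDist u v ^ 2 = 1 - ‖⟪u, v⟫_ℂ‖ ^ 2 := by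
  have hle : ‖⟪u, v⟫_ℂ‖ ≤ 1 := by simpa [hu, hv] using norm_inner_le_norm (𝕜 := ℂ) u v
  rw [fsDist, hu, hv, Real.sq_sqrt] <;> nlinarith [norm_nonneg ⟪u, v⟫_ℂ]

theorem inner_toLp_smul_prod (l m : ℂ) (x y θ : E) :
    ⟪WithLp.toLp 2 (l • x, m • y), WithLp.toLp 2 (θ, θ)⟫_ℂ =
      ⟪WithLp.toLp 2 (l, m), WithLp.toLp 2 (⟪x, θ⟫_ℂ, ⟪y, θ⟫_ℂ)⟫_ℂ := by
  simp only [WithLp.prod_inner_apply, inner_smul_left, RCLike.inner_apply']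

theorem norm_toLp_smul_prod {x y : E} (hx : ‖x‖ = 1) (hy : ‖y‖ = 1) (l m : ℂ) :
    ‖WithLp.toLp 2 (l • x, m • y)‖ = ‖WithLp.toLp 2 (l, m)‖ := by
  rw [← sq_eq_sq₀ (norm_nonneg _) (norm_nonneg _), WithLp.prod_norm_sq_eq_of_L2,
    WithLp.prod_norm_sq_eq_of_L2]
  simp [norm_smul, hx, hy]

theorem fsDist_toLp_smul_prod {x y θ : E} (hx : ‖x‖ = 1) (hy : ‖y‖ = 1) (hθ : ‖θ‖ = 1)
    (l m : ℂ) :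
    fsDist (WithLp.toLp 2 (l • x, m • y)) (WithLp.toLp 2 (θ, θ)) =
      √(1 - ‖⟪WithLp.toLp 2 (l, m), WithLp.toLp 2 (⟪x, θ⟫_ℂ, ⟪y, θ⟫_ℂ)⟫_ℂ‖ ^ 2 /
        ‖WithLp.toLp 2 (l, m)‖ ^ 2 / 2) := by
  have hθθ : ‖WithLp.toLp 2 (θ, θ)‖ ^ 2 = 2 := by
    rw [WithLp.prod_norm_sq_eq_of_L2]
    norm_num [hθ]
  rw [fsDist, inner_toLp_smul_prod, norm_toLp_smul_prod hx hy, hθθ, div_div]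

theorem joinDist_eq_sqrt {x y θ : E} (hx : ‖x‖ = 1) (hy : ‖y‖ = 1) (hθ : ‖θ‖ = 1) :
    joinDist x y θ = √(1 - (‖⟪x, θ⟫_ℂ‖ ^ 2 + ‖⟪y, θ⟫_ℂ‖ ^ 2) / 2) := by
  set w : WithLp 2 (ℂ × ℂ) := WithLp.toLp 2 (⟪x, θ⟫_ℂ, ⟪y, θ⟫_ℂ)
  have hw : ‖w‖ ^ 2 = ‖⟪x, θ⟫_ℂ‖ ^ 2 + ‖⟪y, θ⟫_ℂ‖ ^ 2 := WithLp.prod_norm_sq_eq_of_L2 w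
  obtain ⟨p₀, hp₀, hp₀w⟩ := exists_ne_zero_norm_inner_sq_div_norm_sq_eq (𝕜 := ℂ) w
  have : Nonempty {p : ℂ × ℂ // p ≠ 0} := ⟨⟨(1, 0), by simp⟩⟩
  simp only [joinDist, WithLp.equiv_symm_apply, fsDist_toLp_smul_prod hx hy hθ]
  apply le_antisymm
  · refine (ciInf_le ⟨0, ?_⟩ ⟨p₀.ofLp, by simpa using hp₀⟩).trans_eq ?_
    · rintro _ ⟨p, rfl⟩
      exact Real.sqrt_nonneg _
    · dsimp only
      rw [Prod.mk.eta, WithLp.toLp_ofLp, hp₀w, hw]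
  · refine le_ciInf fun p => Real.sqrt_le_sqrt ?_
    rw [← hw]
    gcongr
    exact norm_inner_sq_div_norm_sq_le _ w

end FubiniStudy

theorem join_dist_bounds_general {E : Type*} [NormedAddCommGroup E] [InnerProductSpace ℂ E]
    (x y θ : E) (hx : ‖x‖ = 1) (hy : ‖y‖ = 1) (hθ : ‖θ‖ = 1) :
    min (fsDist θ x) (fsDist θ y) ≤ joinDist x y θ ∧
      joinDist x y θ ≤ max (fsDist θ x) (fsDist θ y) := by
  have hmean : joinDist x y θ = √((fsDist θ x ^ 2 + fsDist θ y ^ 2) / 2) := by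
    rw [joinDist_eq_sqrt hx hy hθ, fsDist_sq_of_norm_eq_one hθ hx,
      fsDist_sq_of_norm_eq_one hθ hy, norm_inner_symm θ x, norm_inner_symm θ y]
    ring_nf
  rw [hmean]
  exact ⟨min_le_sqrt_add_sq_div_two (fsDist_nonneg θ x) (fsDist_nonneg θ y),
    sqrt_add_sq_div_two_le_max (fsDist_nonneg θ x) (fsDist_nonneg θ y)⟩

/-- Lemma 6.2 (joindist): for unit vectors `x, y, θ` with `[x] ≠ [θ]` and `[y] ≠ [θ]`
as projective points,
`min |[θ],[x]| |[θ],[y]| ≤ dist([θ⊕θ], x#y) ≤ max |[θ],[x]| |[θ],[y]|`. -/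
theorem join_dist_bounds {E : Type*} [NormedAddCommGroup E] [InnerProductSpace ℂ E]
    (x y θ : E) (hx : ‖x‖ = 1) (hy : ‖y‖ = 1) (hθ : ‖θ‖ = 1)
    (hxθ : ∀ c : ℂ, x ≠ c • θ) (hyθ : ∀ c : ℂ, y ≠ c • θ) :
    min (fsDist θ x) (fsDist θ y) ≤ joinDist x y θ ∧
      joinDist x y θ ≤ max (fsDist θ x) (fsDist θ y) :=
  join_dist_bounds_general x y θ hx hy hθ
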